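/- The additive heuristic h_add = h_cou + h_coh is admissible: for any state s, if there is a sequence of n unit-cost refactoring actions (each adding a single intra-edge or removing a single inter-edge) transforming s into a goal state, then h_cou(s) + h_coh(s) ≤ n. -/

import Mathlib

open Finset

variable {V Mo : Type*} [Fintype V] [DecidableEq V] [Fintype Mo] [DecidableEq Mo]

/-- A valid edge set: every directed edge has distinct endpoints. -/
def ValidEdges (E : Finset (V × V)) : Prop := ∀ e ∈ E, e.1 ≠ e.2

/-- The intra-edges of a state: edges whose endpoints lie in the same module. -/
def intraEdges (m : V → Mo) (E : Finset (V × V)) : Finset (V × V) :=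
  E.filter (fun e => m e.1 = m e.2)

/-- The inter-edges between modules `M₁` and `M₂` (in either direction). -/
def interEdges (m : V → Mo) (E : Finset (V × V)) (M₁ M₂ : Mo) : Finset (V × V) :=
  E.filter (fun e => (m e.1 = M₁ ∧ m e.2 = M₂) ∨ (m e.1 = M₂ ∧ m e.2 = M₁))

lemma interEdges_symm (m : V → Mo) (E : Finset (V × V)) (M₁ M₂ : Mo) :
    interEdges m E M₁ M₂ = interEdges m E M₂ M₁ := by
  simp [interEdges, or_comm]

/-- The coupling heuristic: the sum, over unordered pairs `{M₁, M₂}` of distinct modules,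
of `max (0, |Inter_{M₁,M₂}| − 1)` (natural subtraction realizes the `max` with `0`). -/
def hCou (m : V → Mo) (E : Finset (V × V)) : ℕ :=
  ∑ q ∈ (Finset.univ : Finset (Sym2 Mo)),
    Sym2.lift ⟨fun M₁ M₂ => if M₁ = M₂ then 0 else (interEdges m E M₁ M₂).card - 1,
      fun a b => by
        by_cases h : a = b
        · simp [h]
        · dsimp only
          rw [if_neg h, if_neg (Ne.symm h), interEdges_symm]⟩ q

/-- The number of vertices assigned to module `M`. -/
def moduleSize (m : V → Mo) (M : Mo) : ℕ := (Finset.univ.filter (fun v => m v = M)).card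

/-- `E_max = Σ_M |M|(|M|−1)`, the maximum possible number of intra-edges. -/
def Emax (m : V → Mo) : ℕ :=
  ∑ M ∈ (Finset.univ : Finset Mo), moduleSize m M * (moduleSize m M - 1)

/-- The cohesion heuristic: `max (0, ⌈α·E_max⌉ − |Intra(s)|)` (realized via `Int.toNat`). -/
noncomputable def hCoh (α : ℝ) (m : V → Mo) (E : Finset (V × V)) : ℕ :=
  (⌈α * (Emax m : ℝ)⌉ - ((intraEdges m E).card : ℤ)).toNat

/-- One unit-cost refactoring action: either add a single new intra-edge,
or remove a single inter-edge. -/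
def Step (m : V → Mo) (p c : Finset (V × V)) : Prop :=
  (∃ u v : V, u ≠ v ∧ m u = m v ∧ (u, v) ∉ p ∧ c = insert (u, v) p) ∨
  (∃ u v : V, m u ≠ m v ∧ (u, v) ∈ p ∧ c = p.erase (u, v))

/-- A goal state: at most one inter-edge between any two distinct modules, and
the number of intra-edges is at least `α·E_max`. -/
def Goal (α : ℝ) (m : V → Mo) (E : Finset (V × V)) : Prop :=
  (∀ M₁ M₂ : Mo, M₁ ≠ M₂ → (interEdges m E M₁ M₂).card ≤ 1) ∧
  α * (Emax m : ℝ) ≤ ((intraEdges m E).card : ℝ)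

def couTerm (m : V → Mo) (E : Finset (V × V)) : Sym2 Mo → ℕ :=
  Sym2.lift ⟨fun M₁ M₂ => if M₁ = M₂ then 0 else (interEdges m E M₁ M₂).card - 1,
    fun a b => by
      by_cases h : a = b
      · simp [h]
      · dsimp only
        rw [if_neg h, if_neg (Ne.symm h), interEdges_symm]⟩

lemma couTerm_mk (m : V → Mo) (E : Finset (V × V)) (M₁ M₂ : Mo) :
    couTerm m E (s(M₁, M₂)) =
      if M₁ = M₂ then 0 else (interEdges m E M₁ M₂).card - 1 := rfl

lemma hCou_eq (m : V → Mo) (E : Finset (V × V)) :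
    hCou m E = ∑ q ∈ (Finset.univ : Finset (Sym2 Mo)), couTerm m E q := rfl

lemma hCou_goal_zero (α : ℝ) (m : V → Mo) (E : Finset (V × V)) (hg : Goal α m E) :
    hCou m E = 0 := by
  rw [hCou_eq]
  apply Finset.sum_eq_zero
  intro q _
  induction q using Sym2.ind with
  | _ M₁ M₂ =>
    rw [couTerm_mk]
    by_cases h : M₁ = M₂
    · simp [h]
    · have := hg.1 M₁ M₂ h
      rw [if_neg h]
      omega

lemma hCoh_goal_zero (α : ℝ) (m : V → Mo) (E : Finset (V × V)) (hg : Goal α m E) :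
    hCoh α m E = 0 := by
  have : ⌈α * (Emax m : ℝ)⌉ ≤ ((intraEdges m E).card : ℤ) := by
    rw [Int.ceil_le]; exact_mod_cast hg.2
  simp only [hCoh]
  omega

lemma step_le (α : ℝ) (m : V → Mo) {p c : Finset (V × V)} (h : Step m p c) :
    hCou m p + hCoh α m p ≤ hCou m c + hCoh α m c + 1 := by
  rcases h with ⟨u, v, huv, hm, hnp, hc⟩ | ⟨u, v, hm, hp, hc⟩
  · -- add intra edge: hCou unchanged, intra card +1
    have hcou : hCou m c = hCou m p := by
      rw [hCou_eq, hCou_eq]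
      apply Finset.sum_congr rfl
      intro q _
      induction q using Sym2.ind with
      | _ M₁ M₂ =>
        rw [couTerm_mk, couTerm_mk]
        by_cases h' : M₁ = M₂
        · simp [h']
        · have heq : interEdges m c M₁ M₂ = interEdges m p M₁ M₂ := by
            rw [hc, interEdges, Finset.filter_insert, if_neg, interEdges]
            rintro (⟨h1, h2⟩ | ⟨h1, h2⟩) <;> simp only at h1 h2 <;>
              exact h' (by rw [← h1, ← h2, hm])
          rw [heq]
    have hintra : (intraEdges m c).card = (intraEdges m p).card + 1 := by
      rw [hc, intraEdges, Finset.filter_insert, if_pos hm,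
        Finset.card_insert_of_notMem, intraEdges]
      intro hmem
      exact hnp (Finset.mem_of_mem_filter _ hmem)
    have : hCoh α m p ≤ hCoh α m c + 1 := by
      simp only [hCoh, hintra]; push_cast; omega
    omega
  · -- remove inter edge: hCoh unchanged, one coupling term drops by ≤ 1
    have hintra : intraEdges m c = intraEdges m p := by
      rw [hc, intraEdges, Finset.filter_erase, Finset.erase_eq_of_notMem, intraEdges]
      simp only [Finset.mem_filter]
      rintro ⟨-, h'⟩; exact hm h'
    have hcoh : hCoh α m c = hCoh α m p := by rw [hCoh, hintra, hCoh]
    have key : ∀ M₁ M₂ : Mo, interEdges m c M₁ M₂ = (interEdges m p M₁ M₂).erase (u, v) := by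
      intro M₁ M₂
      rw [hc, interEdges, Finset.filter_erase, interEdges]
    set q0 : Sym2 Mo := s(m u, m v) with hq0
    have hmem : (u, v) ∈ interEdges m p (m u) (m v) := by
      rw [interEdges, Finset.mem_filter]
      exact ⟨hp, Or.inl ⟨rfl, rfl⟩⟩
    have hbound : ∀ q : Sym2 Mo,
        couTerm m p q ≤ couTerm m c q + (if q = q0 then 1 else 0) := by
      intro q
      induction q using Sym2.ind with
      | _ M₁ M₂ =>
        rw [couTerm_mk, couTerm_mk]
        by_cases h' : M₁ = M₂
        · simp [h']
        · rw [if_neg h', if_neg h']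
          by_cases hq : s(M₁, M₂) = q0
          · rw [if_pos hq]
            have hcard : (interEdges m c M₁ M₂).card + 1 = (interEdges m p M₁ M₂).card := by
              rw [key]
              have hmem' : (u, v) ∈ interEdges m p M₁ M₂ := by
                rw [hq0, Sym2.eq_iff] at hq
                rcases hq with ⟨h1, h2⟩ | ⟨h1, h2⟩
                · rw [h1, h2]; exact hmem
                · rw [h1, h2, interEdges_symm]; exact hmem
              rw [Finset.card_erase_of_mem hmem']
              have : 1 ≤ (interEdges m p M₁ M₂).card := Finset.card_pos.mpr ⟨_, hmem'⟩
              omega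
            omega
          · rw [if_neg hq]
            have hne : (u, v) ∉ interEdges m p M₁ M₂ := by
              rw [interEdges, Finset.mem_filter]
              rintro ⟨-, (⟨h1, h2⟩ | ⟨h1, h2⟩)⟩ <;> simp only at h1 h2 <;> apply hq
              · rw [hq0, ← h1, ← h2]
              · rw [hq0, ← h1, ← h2, Sym2.eq_swap]
            rw [key, Finset.erase_eq_of_notMem hne]
            omega
    have hcou : hCou m p ≤ hCou m c + 1 := by
      rw [hCou_eq, hCou_eq]
      calc ∑ q, couTerm m p q
          ≤ ∑ q, (couTerm m c q + (if q = q0 then 1 else 0)) :=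
            Finset.sum_le_sum fun q _ => hbound q
        _ = (∑ q, couTerm m c q) + 1 := by
            rw [Finset.sum_add_distrib, Finset.sum_ite_eq' Finset.univ q0 (fun _ => 1),
              if_pos (Finset.mem_univ q0)]
    omega

/-- The additive heuristic `h_add = h_cou + h_coh` is admissible: if a sequence of `n`
unit-cost refactoring actions transforms `s` into a goal state, then
`h_cou(s) + h_coh(s) ≤ n`. -/
theorem hAdd_admissible {V Mo : Type*} [Fintype V] [DecidableEq V] [Fintype Mo] [DecidableEq Mo]
    (α : ℝ) (hα0 : 0 ≤ α) (hα1 : α ≤ 1)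
    (m : V → Mo) (s : Finset (V × V)) (hs : ValidEdges s) (n : ℕ)
    (states : Fin (n + 1) → Finset (V × V))
    (h0 : states 0 = s)
    (hstep : ∀ i : Fin n, Step m (states i.castSucc) (states i.succ))
    (hgoal : Goal α m (states (Fin.last n))) :
    hCou m s + hCoh α m s ≤ n := by
  have key : ∀ k : ℕ, k ≤ n →
      hCou m (states ⟨n - k, by omega⟩) + hCoh α m (states ⟨n - k, by omega⟩) ≤
        hCou m (states (Fin.last n)) + hCoh α m (states (Fin.last n)) + k := by
    intro k
    induction k with
    | zero =>
      intro _
      have : (⟨n - 0, by omega⟩ : Fin (n + 1)) = Fin.last n := by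
        ext; simp [Fin.last]
      rw [this]; omega
    | succ k ih =>
      intro hk
      have hk' : k ≤ n := by omega
      have hlt : n - (k + 1) < n := by omega
      have hstep' := hstep ⟨n - (k + 1), hlt⟩
      have hcast : (⟨n - (k + 1), hlt⟩ : Fin n).castSucc =
          (⟨n - (k + 1), by omega⟩ : Fin (n + 1)) := rfl
      have hsucc : (⟨n - (k + 1), hlt⟩ : Fin n).succ =
          (⟨n - k, by omega⟩ : Fin (n + 1)) := by
        ext; simp [Fin.succ]; omega
      rw [hcast, hsucc] at hstep'
      have h1 := step_le α m hstep'
      have h2 := ih hk'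
      omega
  have h := key n le_rfl
  simp only [Nat.sub_self] at h
  have h0' : (⟨0, by omega⟩ : Fin (n + 1)) = 0 := rfl
  rw [h0', h0] at h
  rw [hCou_goal_zero α m _ hgoal, hCoh_goal_zero α m _ hgoal] at h
  omega
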